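/- For every β > 0, every h ≥ 0 and every sequence of vectors v_1, v_2, … with v_N ∈ ℝ^N and |v_N| = h for all N, there exists a sequence of linear subspaces 𝓜_N ⊆ ℝ^N with dim(𝓜_N) = ⌊N^{3/4}⌋ such that sup{ |Π_{𝓜_N^⊥}( β D_N m + v_N )| : m ∈ 𝓜_N, |m| ≤ 1 } → 0 as N → ∞, where D_N is the N×N diagonal matrix with diagonal entries (D_N)_{ii} = 2 θ_{i/N}, and Π_{𝓜_N^⊥} is the orthogonal projection of ℝ^N onto the orthogonal complement 𝓜_N^⊥. -/

import Mathlib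

open MeasureTheory Filter Real
open scoped RealInnerProductSpace

noncomputable section

/-- The semicircle density `μ(x) = (1/π)√(2-x²) 1_{[-√2,√2]}(x)`. -/
def semicircle (x : ℝ) : ℝ :=
  if x ∈ Set.Icc (-Real.sqrt 2) (Real.sqrt 2) then (1 / Real.pi) * Real.sqrt (2 - x ^ 2) else 0

/-- The classical location `θ_u = inf { θ : ∫_{-√2}^θ μ(x) dx = u }` of the `u`-quantile
of the semicircle law. -/
def theta (u : ℝ) : ℝ :=
  sInf { t : ℝ | ∫ x in (-Real.sqrt 2)..t, semicircle x = u }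

/-- The linear map `D_N = (1/N)∇H̃_N`, i.e. the diagonal matrix with entries `2θ_{i/N}`,
acting on `ℝ^N`. -/
def Dmap (N : ℕ) (v : EuclideanSpace ℝ (Fin N)) : EuclideanSpace ℝ (Fin N) :=
  (WithLp.equiv 2 (Fin N → ℝ)).symm fun i => 2 * theta (((i : ℕ) + 1) / N) * v i

lemma semicircle_eq (x : ℝ) : semicircle x = (1 / Real.pi) * Real.sqrt (2 - x ^ 2) := by
  unfold semicircle
  split_ifs with h
  · rfl
  · rw [Set.mem_Icc, not_and_or] at h
    have h2 : Real.sqrt (2 - x ^ 2) = 0 := by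
      rw [Real.sqrt_eq_zero']
      have hs : Real.sqrt 2 ^ 2 = 2 := Real.sq_sqrt (by norm_num)
      have h0 : (0:ℝ) ≤ Real.sqrt 2 := Real.sqrt_nonneg 2
      rcases h with h | h <;> push_neg at h <;> nlinarith [hs, h0]
    rw [h2, mul_zero]

lemma semicircle_nonneg (x : ℝ) : 0 ≤ semicircle x := by
  rw [semicircle_eq]
  positivity

lemma semicircle_continuous : Continuous semicircle := by
  have : semicircle = fun x => (1 / Real.pi) * Real.sqrt (2 - x ^ 2) := funext semicircle_eq
  rw [this]
  fun_prop

lemma semicircle_total : ∫ x in (-Real.sqrt 2)..(Real.sqrt 2), semicircle x = 1 := by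
  have heq : ∀ x : ℝ, semicircle x = (1 / Real.pi) * Real.sqrt (2 - x ^ 2) := semicircle_eq
  rw [intervalIntegral.integral_congr (fun x _ => heq x)]
  have hs2 : Real.sqrt 2 ≠ 0 := by positivity
  have hsq : Real.sqrt 2 ^ 2 = 2 := Real.sq_sqrt (by norm_num)
  have key : ∀ x : ℝ, Real.sqrt (2 - x ^ 2)
      = Real.sqrt 2 * Real.sqrt (1 - (x / Real.sqrt 2) ^ 2) := by
    intro x
    rw [← Real.sqrt_mul (by norm_num : (0:ℝ) ≤ 2)]
    congr 1
    field_simp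
    rw [hsq]; ring
  calc ∫ x in (-Real.sqrt 2)..(Real.sqrt 2), (1 / Real.pi) * Real.sqrt (2 - x ^ 2)
      = (1 / Real.pi) * ∫ x in (-Real.sqrt 2)..(Real.sqrt 2),
          Real.sqrt 2 * Real.sqrt (1 - (x / Real.sqrt 2) ^ 2) := by
        rw [← intervalIntegral.integral_const_mul]
        congr 1
        funext x
        rw [key]
    _ = (1 / Real.pi) * (Real.sqrt 2 * ∫ x in (-Real.sqrt 2)..(Real.sqrt 2),
          Real.sqrt (1 - (x / Real.sqrt 2) ^ 2)) := by
        rw [intervalIntegral.integral_const_mul]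
    _ = 1 := by
        rw [intervalIntegral.integral_comp_div (fun u => Real.sqrt (1 - u ^ 2)) hs2]
        rw [neg_div, div_self hs2]
        rw [integral_sqrt_one_sub_sq]
        rw [smul_eq_mul]
        field_simp
        nlinarith [Real.pi_pos, hsq]

lemma theta_bounds {u : ℝ} (h0 : 0 < u) (h1 : u ≤ 1) :
    -Real.sqrt 2 ≤ theta u ∧ theta u ≤ Real.sqrt 2 := by
  set F : ℝ → ℝ := fun t => ∫ x in (-Real.sqrt 2)..t, semicircle x with hF
  have hFc : Continuous F :=
    intervalIntegral.continuous_primitive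
      (fun a b => semicircle_continuous.intervalIntegrable a b) _
  have hlb : ∀ t ∈ { t : ℝ | F t = u }, -Real.sqrt 2 ≤ t := by
    intro t ht
    by_contra hc
    push_neg at hc
    have : F t ≤ 0 := by
      have : (0:ℝ) ≤ ∫ x in t..(-Real.sqrt 2), semicircle x :=
        intervalIntegral.integral_nonneg (le_of_lt hc)
        (fun x _ => semicircle_nonneg x)
      have heq : F t = -∫ x in t..(-Real.sqrt 2), semicircle x :=
        intervalIntegral.integral_symm _ _
      rw [heq]
      linarith
    simp only [Set.mem_setOf_eq] at ht
    linarith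
  have hne : ∃ t ∈ Set.Icc (-Real.sqrt 2) (Real.sqrt 2), F t = u := by
    have hab : -Real.sqrt 2 ≤ Real.sqrt 2 := by
      have := Real.sqrt_nonneg 2; linarith
    have := intermediate_value_Icc hab hFc.continuousOn
    have hmem : u ∈ Set.Icc (F (-Real.sqrt 2)) (F (Real.sqrt 2)) := by
      have h1' : F (-Real.sqrt 2) = 0 := intervalIntegral.integral_same
      have h2' : F (Real.sqrt 2) = 1 := semicircle_total
      rw [h1', h2']
      exact ⟨le_of_lt h0, h1⟩
    obtain ⟨t, ht, hFt⟩ := this hmem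
    exact ⟨t, ht, hFt⟩
  obtain ⟨t, htIcc, htF⟩ := hne
  constructor
  · exact le_csInf ⟨t, htF⟩ hlb
  · exact le_trans (csInf_le ⟨-Real.sqrt 2, hlb⟩ htF) htIcc.2

/-- evaluation at a coordinate, as a linear map -/
def ev (N : ℕ) (i : Fin N) : EuclideanSpace ℝ (Fin N) →ₗ[ℝ] ℝ :=
  (LinearMap.proj i).comp (WithLp.linearEquiv 2 ℝ (Fin N → ℝ)).toLinearMap

lemma ev_apply {N : ℕ} (i : Fin N) (x : EuclideanSpace ℝ (Fin N)) : ev N i x = x i := rfl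

lemma sum_coord {N : ℕ} {ι : Type*} (t : Finset ι) (f : ι → EuclideanSpace ℝ (Fin N))
    (p : Fin N) : (∑ a ∈ t, f a) p = ∑ a ∈ t, f a p :=
  map_sum (ev N p) f t

/-- multiplication by a diagonal, as a linear map -/
def diagL (N : ℕ) (d : Fin N → ℝ) :
    EuclideanSpace ℝ (Fin N) →ₗ[ℝ] EuclideanSpace ℝ (Fin N) where
  toFun x := (WithLp.equiv 2 (Fin N → ℝ)).symm fun i => d i * x i
  map_add' x y := by
    ext i
    simp [PiLp.toLp_apply]
    ring
  map_smul' a x := by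
    ext i
    simp [PiLp.toLp_apply]
    ring

lemma diagL_apply {N : ℕ} (d : Fin N → ℝ) (x : EuclideanSpace ℝ (Fin N)) (i : Fin N) :
    diagL N d x i = d i * x i := rfl

lemma Dmap_eq_diagL {N : ℕ} (x : EuclideanSpace ℝ (Fin N)) :
    Dmap N x = diagL N (fun i => 2 * theta (((i : ℕ) + 1) / N)) x := rfl

set_option maxHeartbeats 2000000 in
lemma key (N : ℕ) (β : ℝ) (hβ : 0 < β) (vv : EuclideanSpace ℝ (Fin N)) :
    ∃ M : Submodule ℝ (EuclideanSpace ℝ (Fin N)),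
      Module.finrank ℝ M = ⌊((N : ℝ)) ^ ((3 : ℝ) / 4)⌋₊ ∧
      ∀ m : EuclideanSpace ℝ (Fin N), m ∈ M → ‖m‖ ≤ 1 →
        ‖(Submodule.orthogonalProjectionOnto Mᗮ (β • Dmap N m + vv) : EuclideanSpace ℝ (Fin N))‖
          ≤ β * (4 * Real.sqrt 2 / (⌊((N : ℝ)) ^ ((3 : ℝ) / 4)⌋₊ : ℝ)) := by
  classical
  rcases Nat.eq_zero_or_pos N with hN | hN
  · subst hN
    refine ⟨⊥, ?_, ?_⟩
    · simp [Real.zero_rpow (by norm_num : (3 : ℝ) / 4 ≠ 0)]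
    · intro m _ _
      have hz : (Submodule.orthogonalProjectionOnto (⊥ : Submodule ℝ (EuclideanSpace ℝ (Fin 0)))ᗮ
          (β • Dmap 0 m + vv) : EuclideanSpace ℝ (Fin 0)) = 0 := Subsingleton.elim _ _
      rw [hz, norm_zero]
      positivity
  -- main case
  set k := ⌊((N : ℝ)) ^ ((3 : ℝ) / 4)⌋₊ with hkdef
  have hk1 : 1 ≤ k := by
    rw [hkdef]
    apply Nat.le_floor
    rw [Nat.cast_one]
    exact Real.one_le_rpow (by exact_mod_cast hN) (by norm_num)
  have hkN : k ≤ N := by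
    rw [hkdef]
    calc ⌊((N : ℝ)) ^ ((3 : ℝ) / 4)⌋₊ ≤ ⌊((N : ℝ) : ℝ)⌋₊ := by
          apply Nat.floor_le_floor
          calc ((N : ℝ)) ^ ((3 : ℝ) / 4) ≤ ((N : ℝ)) ^ ((1 : ℝ)) :=
                Real.rpow_le_rpow_of_exponent_le (by exact_mod_cast hN) (by norm_num)
            _ = (N : ℝ) := Real.rpow_one _
      _ = N := Nat.floor_natCast N
  have hkR : (1 : ℝ) ≤ (k : ℝ) := by exact_mod_cast hk1
  set ε := 4 * Real.sqrt 2 / (k : ℝ) with hεdef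
  have hε : 0 < ε := by
    apply div_pos (by positivity) (by linarith)
  have hkε : (k : ℝ) * ε = 4 * Real.sqrt 2 := by
    rw [hεdef]
    field_simp
  set s : Fin N → ℝ := fun i => 2 * theta (((i : ℕ) + 1) / N) with hsdef
  have hs : ∀ i, -(2 * Real.sqrt 2) ≤ s i ∧ s i ≤ 2 * Real.sqrt 2 := by
    intro i
    have h0 : (0 : ℝ) < ((i : ℕ) + 1) / N := by
      apply div_pos (by positivity) (by exact_mod_cast hN)
    have h1 : ((i : ℕ) + 1) / (N : ℝ) ≤ 1 := by
      rw [div_le_one (by exact_mod_cast hN)]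
      have := i.2
      exact_mod_cast Nat.succ_le_of_lt i.2
    obtain ⟨ha, hb⟩ := theta_bounds h0 h1
    constructor <;> simp only [hsdef] <;> linarith
  set μ : Fin k → ℝ := fun j => -(2 * Real.sqrt 2) + (j : ℕ) * ε with hμdef
  set c : Fin N → Fin k := fun i =>
    ⟨min (k - 1) ⌊(s i + 2 * Real.sqrt 2) / ε⌋₊,
      lt_of_le_of_lt (min_le_left _ _) (by omega)⟩ with hcdef
  have hc : ∀ i, 0 ≤ s i - μ (c i) ∧ s i - μ (c i) ≤ ε := by
    intro i
    set y := s i + 2 * Real.sqrt 2 with hydef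
    have hy0 : 0 ≤ y := by have := (hs i).1; rw [hydef]; linarith
    have hy4 : y ≤ (k : ℝ) * ε := by have := (hs i).2; rw [hkε, hydef]; linarith
    set f := ⌊y / ε⌋₊ with hfdef
    have hf1 : (f : ℝ) * ε ≤ y := by
      rw [← le_div_iff₀ hε]
      exact Nat.floor_le (by positivity)
    have hf2 : y < ((f : ℝ) + 1) * ε := by
      rw [← div_lt_iff₀ hε]
      exact_mod_cast Nat.lt_floor_add_one (y / ε)
    have hgoal : s i - μ (c i) = y - ((min (k - 1) f : ℕ) : ℝ) * ε := by
      simp only [hμdef, hcdef, hydef]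
      ring
    rw [hgoal]
    have hcast1 : ((k - 1 : ℕ) : ℝ) = (k : ℝ) - 1 := by
      push_cast [hk1]
      ring
    rcases le_or_gt f (k - 1) with h | h
    · rw [min_eq_right h]
      constructor <;> nlinarith
    · have hfk : k ≤ f := by omega
      have hfkR : (k : ℝ) ≤ (f : ℝ) := by exact_mod_cast hfk
      rw [min_eq_left (le_of_lt h), hcast1]
      constructor <;> nlinarith
  -- the window pieces of vv
  set w : Fin k → EuclideanSpace ℝ (Fin N) := fun j =>
    (WithLp.equiv 2 (Fin N → ℝ)).symm fun i => if c i = j then vv i else 0 with hwdef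
  have hwapp : ∀ j i, w j i = if c i = j then vv i else 0 := fun j i => rfl
  set J : Finset (Fin k) := Finset.univ.filter (fun j => w j ≠ 0) with hJdef
  have hpiv : ∀ j, w j ≠ 0 → ∃ p : Fin N, c p = j ∧ vv p ≠ 0 := by
    intro j hj
    have : ∃ i, w j i ≠ 0 := by
      by_contra hno
      push_neg at hno
      exact hj (by ext i; simpa using hno i)
    obtain ⟨i, hi⟩ := this
    rw [hwapp] at hi
    by_cases hci : c i = j
    · exact ⟨i, hci, by simpa [hci] using hi⟩
    · simp [hci] at hi
  set pv : Fin k → Fin N := fun j =>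
    if hj : w j ≠ 0 then (hpiv j hj).choose else ⟨0, hN⟩ with hpvdef
  have hpv : ∀ j ∈ J, c (pv j) = j ∧ vv (pv j) ≠ 0 := by
    intro j hj
    rw [hJdef, Finset.mem_filter] at hj
    have hpvj : pv j = (hpiv j hj.2).choose := dif_pos hj.2
    rw [hpvj]
    exact (hpiv j hj.2).choose_spec
  set P : Finset (Fin N) := J.image pv with hPdef
  have hPcard : P.card = J.card := by
    rw [hPdef]
    apply Finset.card_image_of_injOn
    intro j hj j' hj' hEq
    rw [← (hpv j hj).1, ← (hpv j' hj').1, hEq]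
  have hJk : J.card ≤ k := by
    simpa using Finset.card_le_univ J
  obtain ⟨Ef, hEfsub, hEfcard⟩ := Finset.exists_subset_card_eq (s := Finset.univ \ P) (n := k - J.card)
    (by
      rw [Finset.card_sdiff_of_subset (Finset.subset_univ P), hPcard, Finset.card_univ, Fintype.card_fin]
      omega)
  have hEfP : ∀ i : Fin N, i ∈ Ef → i ∉ P := fun i hi =>
    (Finset.mem_sdiff.mp (hEfsub hi)).2
  set b : (↥J ⊕ ↥Ef) → EuclideanSpace ℝ (Fin N) :=
    Sum.elim (fun j => w (j : Fin k)) (fun i => EuclideanSpace.single (i : Fin N) 1) with hbdef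
  have hcard : Fintype.card (↥J ⊕ ↥Ef) = k := by
    rw [Fintype.card_sum, Fintype.card_coe, Fintype.card_coe, hEfcard]
    omega
  have hb : LinearIndependent ℝ b := by
    rw [Fintype.linearIndependent_iff]
    intro g hg
    have hev : ∀ p : Fin N, ∑ a : ↥J ⊕ ↥Ef, g a * b a p = 0 := by
      intro p
      have h1 := congrArg (ev N p) hg
      rw [map_sum, map_zero] at h1
      simpa [ev_apply] using h1
    have hJ0 : ∀ j : ↥J, g (Sum.inl j) = 0 := by
      intro j
      obtain ⟨hcp, hvp⟩ := hpv (j : Fin k) j.2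
      have h2 := hev (pv (j : Fin k))
      rw [Fintype.sum_sum_type] at h2
      have hinr : ∀ i : ↥Ef, g (Sum.inr i) * b (Sum.inr i) (pv (j : Fin k)) = 0 := by
        intro i
        have hne : pv (j : Fin k) ≠ (i : Fin N) := by
          intro hEq
          apply hEfP _ i.2
          rw [← hEq, hPdef]
          exact Finset.mem_image_of_mem pv j.2
        rw [hbdef]
        simp [EuclideanSpace.single_apply, hne]
      have hinl : ∀ j' : ↥J, j' ≠ j →
          g (Sum.inl j') * b (Sum.inl j') (pv (j : Fin k)) = 0 := by
        intro j' hne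
        have hne' : ¬((j : Fin k) = (j' : Fin k)) := fun hEq => hne (Subtype.ext hEq.symm)
        rw [hbdef]
        simp only [Sum.elim_inl, hwapp, hcp, if_neg hne', mul_zero]
      rw [Finset.sum_eq_zero (fun i _ => hinr i), add_zero,
        Finset.sum_eq_single_of_mem j (Finset.mem_univ j) (fun j' _ h => hinl j' h)] at h2
      rw [hbdef] at h2
      simp only [Sum.elim_inl, hwapp, hcp, if_pos rfl] at h2
      exact (mul_eq_zero.mp h2).resolve_right hvp
    intro a
    match a with
    | Sum.inl j => exact hJ0 j
    | Sum.inr i =>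
      have h2 := hev (i : Fin N)
      rw [Fintype.sum_sum_type] at h2
      rw [Finset.sum_eq_zero (fun j _ => by rw [hJ0 j, zero_mul])] at h2
      rw [Finset.sum_eq_single_of_mem i (Finset.mem_univ i)
        (fun i' _ h => by
          have hne : (i : Fin N) ≠ (i' : Fin N) := by
            intro hEq
            exact h (Subtype.ext hEq.symm)
          rw [hbdef]
          simp [EuclideanSpace.single_apply, hne])] at h2
      rw [hbdef] at h2
      simp only [Sum.elim_inr, EuclideanSpace.single_apply, if_pos rfl, if_true,
        mul_one, zero_add] at h2
      simpa using h2
  refine ⟨Submodule.span ℝ (Set.range b), ?_, ?_⟩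
  · rw [finrank_span_eq_card hb, hcard]
  · set M := Submodule.span ℝ (Set.range b) with hMdef
    have hwM : ∀ j : Fin k, w j ∈ M := by
      intro j
      by_cases hj : w j = 0
      · rw [hj]; exact M.zero_mem
      · exact Submodule.subset_span ⟨Sum.inl ⟨j, by rw [hJdef]; simp [hj]⟩, rfl⟩
    have hsingleM : ∀ i : ↥Ef, EuclideanSpace.single (i : Fin N) (1 : ℝ) ∈ M :=
      fun i => Submodule.subset_span ⟨Sum.inr i, rfl⟩
    have hvsum : vv = ∑ j : Fin k, w j := by
      ext p
      rw [sum_coord]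
      simp only [hwapp]
      rw [Finset.sum_ite_eq Finset.univ (c p) (fun _ => vv p)]
      simp
    have hvM : vv ∈ M := hvsum ▸ Submodule.sum_mem M (fun j _ => hwM j)
    set T := diagL N (fun i => μ (c i)) with hTdef
    have hTw : ∀ j : Fin k, T (w j) = μ j • w j := by
      intro j
      ext i
      have h1 : T (w j) i = μ (c i) * w j i := rfl
      rw [h1, PiLp.smul_apply, smul_eq_mul, hwapp]
      by_cases hci : c i = j <;> simp [hci]
    have hTsingle : ∀ p : Fin N,
        T (EuclideanSpace.single p (1 : ℝ)) = μ (c p) • EuclideanSpace.single p 1 := by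
      intro p
      ext i
      have h1 : T (EuclideanSpace.single p (1 : ℝ)) i
          = μ (c i) * (EuclideanSpace.single p (1 : ℝ)) i := rfl
      rw [h1, PiLp.smul_apply, smul_eq_mul]
      by_cases hip : i = p
      · subst hip; simp
      · simp [EuclideanSpace.single_apply, hip]
    have hTM : ∀ x ∈ M, T x ∈ M := by
      intro x hx
      induction hx using Submodule.span_induction with
      | mem y hy =>
        obtain ⟨a, rfl⟩ := hy
        match a with
        | Sum.inl j =>
          have hba : b (Sum.inl j) = w (j : Fin k) := rfl
          rw [hba, hTw]
          exact M.smul_mem _ (hwM _)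
        | Sum.inr i =>
          have hba : b (Sum.inr i) = EuclideanSpace.single (i : Fin N) (1 : ℝ) := rfl
          rw [hba, hTsingle]
          exact M.smul_mem _ (hsingleM i)
      | zero => rw [map_zero]; exact M.zero_mem
      | add y z _ _ hy hz => rw [map_add]; exact M.add_mem hy hz
      | smul a y _ hy => rw [_root_.map_smul]; exact M.smul_mem a hy
    clear hMdef
    clear_value M
    intro m hm hm1
    set r := Dmap N m - T m with hrdef
    have hrapp : ∀ i, r i = (s i - μ (c i)) * m i := by
      intro i
      have h0 : r i = Dmap N m i - T m i := by
        have h3 := map_sub (ev N i) (Dmap N m) (T m)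
        simpa [ev_apply, hrdef] using h3
      have h1 : Dmap N m i = s i * m i := rfl
      have h2 : T m i = μ (c i) * m i := rfl
      rw [h0, h1, h2]
      ring
    have hdm : β • Dmap N m + vv = (β • T m + vv) + β • r := by
      rw [hrdef, smul_sub]
      abel
    have haM : β • T m + vv ∈ M := M.add_mem (M.smul_mem β (hTM m hm)) hvM
    have hproj : Submodule.orthogonalProjectionOnto Mᗮ (β • Dmap N m + vv)
        = Submodule.orthogonalProjectionOnto Mᗮ (β • r) := by
      have haMoo : β • T m + vv ∈ Mᗮᗮ := Submodule.le_orthogonal_orthogonal M haM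
      have hz : Submodule.orthogonalProjectionOnto Mᗮ (β • T m + vv) = 0 :=
        Submodule.orthogonalProjectionOnto_apply_of_mem_orthogonal haMoo
      rw [hdm, map_add, hz, zero_add]
    have hrnorm : ‖r‖ ≤ ε * ‖m‖ := by
      rw [EuclideanSpace.norm_eq, EuclideanSpace.norm_eq]
      have hsum : ∑ i, ‖r i‖ ^ 2 ≤ ∑ i, ε ^ 2 * ‖m i‖ ^ 2 := by
        apply Finset.sum_le_sum
        intro i _
        rw [hrapp]
        have habs : |s i - μ (c i)| ≤ ε :=
          abs_le.mpr ⟨by linarith [(hc i).1, hε.le], (hc i).2⟩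
        have hmm : ‖(s i - μ (c i)) * m i‖ = |s i - μ (c i)| * ‖m i‖ := by
          rw [Real.norm_eq_abs, abs_mul, Real.norm_eq_abs]
        rw [hmm]
        calc (|s i - μ (c i)| * ‖m i‖) ^ 2 = |s i - μ (c i)| ^ 2 * ‖m i‖ ^ 2 := by ring
          _ ≤ ε ^ 2 * ‖m i‖ ^ 2 := by
              apply mul_le_mul_of_nonneg_right _ (sq_nonneg _)
              exact pow_le_pow_left₀ (abs_nonneg _) habs 2
      calc Real.sqrt (∑ i, ‖r i‖ ^ 2) ≤ Real.sqrt (∑ i, ε ^ 2 * ‖m i‖ ^ 2) :=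
            Real.sqrt_le_sqrt hsum
        _ = Real.sqrt (ε ^ 2 * ∑ i, ‖m i‖ ^ 2) := by rw [← Finset.mul_sum]
        _ = ε * Real.sqrt (∑ i, ‖m i‖ ^ 2) := by
            rw [Real.sqrt_mul (sq_nonneg ε), Real.sqrt_sq hε.le]
    calc ‖(Submodule.orthogonalProjectionOnto Mᗮ (β • Dmap N m + vv) : EuclideanSpace ℝ (Fin N))‖
        = ‖(Submodule.orthogonalProjectionOnto Mᗮ (β • r) : EuclideanSpace ℝ (Fin N))‖ := by rw [hproj]
      _ ≤ ‖β • r‖ := by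
          have h1 := (Submodule.orthogonalProjectionOnto Mᗮ).le_opNorm (β • r)
          have h2 := Submodule.orthogonalProjectionOnto_norm_le Mᗮ
          calc ‖(Submodule.orthogonalProjectionOnto Mᗮ (β • r) : EuclideanSpace ℝ (Fin N))‖
              = ‖Submodule.orthogonalProjectionOnto Mᗮ (β • r)‖ := rfl
            _ ≤ ‖Submodule.orthogonalProjectionOnto Mᗮ‖ * ‖β • r‖ := h1
            _ ≤ 1 * ‖β • r‖ := mul_le_mul_of_nonneg_right h2 (norm_nonneg _)
            _ = ‖β • r‖ := one_mul _
      _ = β * ‖r‖ := by rw [norm_smul, Real.norm_eq_abs, abs_of_pos hβ]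
      _ ≤ β * (ε * ‖m‖) := mul_le_mul_of_nonneg_left hrnorm hβ.le
      _ ≤ β * ε := by nlinarith [mul_nonneg hβ.le hε.le, norm_nonneg m, hm1, hε.le, hβ.le]


theorem exists_almost_invariant_subspaces
    (β h : ℝ) (hβ : 0 < β) (hh : 0 ≤ h)
    (v : (N : ℕ) → EuclideanSpace ℝ (Fin N)) (hnorm : ∀ N, 1 ≤ N → ‖v N‖ = h) :
    ∃ M : (N : ℕ) → Submodule ℝ (EuclideanSpace ℝ (Fin N)),
      (∀ N : ℕ, Module.finrank ℝ (M N) = ⌊((N : ℝ)) ^ ((3 : ℝ) / 4)⌋₊) ∧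
      Filter.Tendsto
        (fun N : ℕ => ⨆ m : (M N), ⨆ _ : ‖(m : EuclideanSpace ℝ (Fin N))‖ ≤ 1,
          ‖(Submodule.orthogonalProjectionOnto (M N)ᗮ
              (β • Dmap N (m : EuclideanSpace ℝ (Fin N)) + v N) : EuclideanSpace ℝ (Fin N))‖)
        Filter.atTop (nhds 0) := by
  choose M hrank hbound using fun N => key N β hβ (v N)
  refine ⟨M, hrank, ?_⟩
  set g : ℕ → ℝ := fun N => β * (4 * Real.sqrt 2 / (⌊((N : ℝ)) ^ ((3 : ℝ) / 4)⌋₊ : ℝ))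
    with hgdef
  have hg0 : ∀ N, 0 ≤ g N := by
    intro N
    rw [hgdef]
    positivity
  apply squeeze_zero (g := g)
  · intro N
    exact Real.iSup_nonneg fun m => Real.iSup_nonneg fun _ => norm_nonneg _
  · intro N
    apply Real.iSup_le _ (hg0 N)
    intro m
    apply Real.iSup_le _ (hg0 N)
    intro hm1
    exact hbound N m m.2 hm1
  · have h1 : Tendsto (fun N : ℕ => ((⌊((N : ℝ)) ^ ((3 : ℝ) / 4)⌋₊ : ℕ) : ℝ)) atTop atTop := by
      apply tendsto_natCast_atTop_atTop.comp
      apply tendsto_nat_floor_atTop.comp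
      exact (tendsto_rpow_atTop (by norm_num)).comp tendsto_natCast_atTop_atTop
    have h2 : Tendsto (fun N : ℕ => 4 * Real.sqrt 2 / ((⌊((N : ℝ)) ^ ((3 : ℝ) / 4)⌋₊ : ℕ) : ℝ))
        atTop (nhds 0) := Filter.Tendsto.div_atTop tendsto_const_nhds h1
    have h3 := h2.const_mul β
    rw [mul_zero] at h3
    exact h3

end
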